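/- The HOW function lies below the quadratic and only down-weighs outlier-corrupted values: for all x ∈ ℝ, l_{σ,c}(x) ≤ x²/2, with equality if and only if |x| ≤ c. -/

import Mathlib

/-!
For `|x| > c` put `t = x² - c² > 0`. Since `e^u > 1 + u` for `u ≠ 0`, the Welsch part
`σ²/2 · (1 - e^{-t/σ²})` is strictly below `t/2`, so `how σ c x < c²/2 + t/2 = x²/2` there;
on `|x| ≤ c` both sides agree by definition.
-/

/-- The hybrid ordinary-Welsch (HOW) function with parameters `σ, c > 0`. -/
noncomputable def how (σ c x : ℝ) : ℝ :=
  if |x| ≤ c then x ^ 2 / 2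
  else σ ^ 2 / 2 * (1 - Real.exp ((c ^ 2 - x ^ 2) / σ ^ 2)) + c ^ 2 / 2

open Real

theorem mul_one_sub_exp_neg_div_lt {s t : ℝ} (hs : 0 ≤ s) (ht : 0 < t) :
    s * (1 - exp (-t / s)) < t := by
  rcases hs.eq_or_lt with rfl | hs
  · simpa using ht
  have hexp : -t / s + 1 < exp (-t / s) :=
    add_one_lt_exp (div_ne_zero (neg_ne_zero.mpr ht.ne') hs.ne')
  calc s * (1 - exp (-t / s)) < s * (t / s) := by
        gcongr
        linarith [neg_div s t]
    _ = t := mul_div_cancel₀ t hs.ne'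

theorem how_lt_sq_div_two (σ : ℝ) {c x : ℝ} (hc : 0 ≤ c) (hx : c < |x|) :
    how σ c x < x ^ 2 / 2 := by
  have hcx : c ^ 2 < x ^ 2 := by
    simpa only [sq_abs] using pow_lt_pow_left₀ hx hc two_ne_zero
  have key := mul_one_sub_exp_neg_div_lt (sq_nonneg σ) (sub_pos.mpr hcx)
  rw [neg_sub] at key
  rw [how, if_neg hx.not_ge]
  linarith

theorem how_le_quadratic_general (σ c : ℝ) (hc : 0 < c) :
    ∀ x : ℝ, how σ c x ≤ x ^ 2 / 2 ∧ (how σ c x = x ^ 2 / 2 ↔ |x| ≤ c) := by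
  intro x
  by_cases hx : |x| ≤ c
  · simp [how, hx]
  · have hlt := how_lt_sq_div_two σ hc.le (not_le.mp hx)
    exact ⟨hlt.le, iff_of_false hlt.ne hx⟩

/-- The HOW function lies below the quadratic, with equality
exactly on the non-outlier region `|x| ≤ c`. -/
theorem how_le_quadratic (σ c : ℝ) (hσ : 0 < σ) (hc : 0 < c) :
    ∀ x : ℝ, how σ c x ≤ x ^ 2 / 2 ∧ (how σ c x = x ^ 2 / 2 ↔ |x| ≤ c) :=
  how_le_quadratic_general σ c hc
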